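/- For every m with 0 ≤ m ≤ M−1, the rate matrices satisfy R_{m+1} D^{m+1} = Ũ^m. -/
import Mathlib


open Matrix

set_option maxHeartbeats 1600000 in
theorem stmt_10
    (M l : ℕ) (hM : 1 ≤ M)
    (Q : Matrix (Fin (M+1) × Fin (l+1)) (Fin (M+1) × Fin (l+1)) ℝ)
    (htri : ∀ (m n : Fin (M+1)) (i j : Fin (l+1)),
      1 < |(m.val : ℤ) - (n.val : ℤ)| → Q (m, i) (n, j) = 0)
    (hrow : ∀ s, ∑ t, Q s t = 0)
    (W U D : ℕ → Matrix (Fin (l+1)) (Fin (l+1)) ℝ)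
    (hW : ∀ (m : ℕ) (hm : m ≤ M) (i j : Fin (l+1)),
      W m i j = Q (⟨m, by omega⟩, i) (⟨m, by omega⟩, j))
    (hU : ∀ (m : ℕ) (hm : m < M) (i j : Fin (l+1)),
      U m i j = Q (⟨m, by omega⟩, i) (⟨m+1, by omega⟩, j))
    (hD : ∀ (m : ℕ) (hm1 : 1 ≤ m) (hm2 : m ≤ M) (i j : Fin (l+1)),
      D m i j = Q (⟨m, by omega⟩, i) (⟨m-1, by omega⟩, j))
    (hDES : ∀ (m : ℕ), 1 ≤ m → m ≤ M → ∀ (i j : Fin (l+1)), j ≠ 0 → D m i j = 0)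
    (Ut : ℕ → Matrix (Fin (l+1)) (Fin (l+1)) ℝ)
    (hUt : ∀ (m : ℕ), m < M → ∀ (i j : Fin (l+1)),
      Ut m i j = if j = 0 then ∑ k, U m i k else 0)
    (hUtM : Ut M = 0)
    (B : ℕ → Matrix (Fin (l+1)) (Fin (l+1)) ℝ)
    (hB : ∀ (m : ℕ), m ≤ M → B m = W m + Ut m)
    (hBinv : ∀ (m : ℕ), 1 ≤ m → m ≤ M → IsUnit (B m))
    (R : ℕ → Matrix (Fin (l+1)) (Fin (l+1)) ℝ)
    (hR : ∀ (m : ℕ), 1 ≤ m → m ≤ M → R m = -(U (m-1) * (B m)⁻¹)) :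
    ∀ (m : ℕ) (hm : m < M), R (m+1) * D (m+1) = Ut m := by
  intro m hm
  have hm1 : 1 ≤ m + 1 := by omega
  have hm2 : m + 1 ≤ M := hm
  set J : Matrix (Fin (l+1)) (Fin (l+1)) ℝ :=
    Matrix.of (fun i j => if j = 0 then (1:ℝ) else 0) with hJ
  have hmulJ : ∀ (A : Matrix (Fin (l+1)) (Fin (l+1)) ℝ) (i j : Fin (l+1)),
      (A * J) i j = if j = 0 then ∑ k, A i k else 0 := by
    intro A i j
    simp only [Matrix.mul_apply, hJ, Matrix.of_apply, mul_ite, mul_one, mul_zero]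
    split <;> simp
  -- the key row-sum identity
  have hD1 : ∀ i : Fin (l+1), D (m+1) i 0 = -(∑ k, B (m+1) i k) := by
    intro i
    set a : Fin (M+1) := ⟨m+1, by omega⟩ with ha
    have h0 := hrow (a, i)
    rw [Fintype.sum_prod_type] at h0
    have hDrow : ∀ j : Fin (l+1), D (m+1) i j = Q (a, i) (⟨m, by omega⟩, j) := by
      intro j
      have := hD (m+1) hm1 hm2 i j
      simpa using this
    have hD0 : D (m+1) i 0 = ∑ j, D (m+1) i j := by
      refine (Finset.sum_eq_single 0 (fun b _ hb => hDES (m+1) hm1 hm2 i b hb)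
        (by simp)).symm
    have hWrow : ∀ j : Fin (l+1), W (m+1) i j = Q (a, i) (a, j) :=
      fun j => hW (m+1) hm2 i j
    rcases eq_or_lt_of_le hm2 with hMeq | hlt
    · -- m + 1 = M : no up-block
      have hsub : (∑ n : Fin (M+1), ∑ j, Q (a, i) (n, j)) =
          ∑ n ∈ ({⟨m, by omega⟩, a} : Finset (Fin (M+1))), ∑ j, Q (a, i) (n, j) := by
        refine (Finset.sum_subset (Finset.subset_univ _) ?_).symm
        intro n _ hn
        simp only [Finset.mem_insert, Finset.mem_singleton] at hn
        push_neg at hn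
        obtain ⟨hn1, hn2⟩ := hn
        refine Finset.sum_eq_zero fun j _ => htri a n i j ?_
        have h1 : (n : ℕ) ≠ m := fun h => hn1 (Fin.ext h)
        have h2 : (n : ℕ) ≠ m + 1 := fun h => hn2 (Fin.ext h)
        have h3 : (n : ℕ) ≤ M := Nat.lt_succ_iff.mp n.isLt
        have hlt' : (n : ℕ) < m := by omega
        refine lt_of_lt_of_le ?_ (le_abs_self _)
        simp only [ha]
        push_cast
        omega
      have hne : (⟨m, by omega⟩ : Fin (M+1)) ≠ a := by
        simp [ha, Fin.ext_iff]
      rw [hsub, Finset.sum_insert (by simpa using hne), Finset.sum_singleton] at h0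
      have hUtrow : ∑ k, Ut (m+1) i k = 0 := by
        rw [hMeq, hUtM]; simp
      have hBsum : ∑ k, B (m+1) i k = ∑ j, Q (a, i) (a, j) := by
        rw [show (∑ k, B (m+1) i k) = ∑ k, (W (m+1) i k + Ut (m+1) i k) from
          Finset.sum_congr rfl fun k _ => by rw [hB (m+1) hm2]; rfl]
        rw [Finset.sum_add_distrib, hUtrow, add_zero]
        exact Finset.sum_congr rfl fun j _ => hWrow j
      rw [hD0]
      have hQd : ∑ j, D (m+1) i j = ∑ j, Q (a, i) (⟨m, by omega⟩, j) :=
        Finset.sum_congr rfl fun j _ => hDrow j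
      linarith [h0, hBsum, hQd]
    · -- m + 1 < M : three blocks
      set b2 : Fin (M+1) := ⟨m+2, by omega⟩ with hb2
      have hsub : (∑ n : Fin (M+1), ∑ j, Q (a, i) (n, j)) =
          ∑ n ∈ ({⟨m, by omega⟩, a, b2} : Finset (Fin (M+1))), ∑ j, Q (a, i) (n, j) := by
        refine (Finset.sum_subset (Finset.subset_univ _) ?_).symm
        intro n _ hn
        simp only [Finset.mem_insert, Finset.mem_singleton] at hn
        push_neg at hn
        obtain ⟨hn1, hn2, hn3⟩ := hn
        refine Finset.sum_eq_zero fun j _ => htri a n i j ?_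
        have h1 : (n : ℕ) ≠ m := fun h => hn1 (Fin.ext h)
        have h2 : (n : ℕ) ≠ m + 1 := fun h => hn2 (Fin.ext h)
        have h3 : (n : ℕ) ≠ m + 2 := fun h => hn3 (Fin.ext h)
        rcases lt_or_gt_of_ne h2 with hlt' | hgt'
        · refine lt_of_lt_of_le ?_ (le_abs_self _)
          simp only [ha]; push_cast; omega
        · refine lt_of_lt_of_le ?_ (neg_le_abs _)
          simp only [ha]; push_cast; omega
      have hne1 : (⟨m, by omega⟩ : Fin (M+1)) ∉ ({a, b2} : Finset (Fin (M+1))) := by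
        simp [ha, hb2, Fin.ext_iff]
      have hne2 : a ∉ ({b2} : Finset (Fin (M+1))) := by
        simp [ha, hb2, Fin.ext_iff]
      rw [hsub, Finset.sum_insert hne1, Finset.sum_insert hne2,
        Finset.sum_singleton] at h0
      have hUrow : ∀ j : Fin (l+1), U (m+1) i j = Q (a, i) (b2, j) :=
        fun j => hU (m+1) hlt i j
      have hUtrow : ∑ k, Ut (m+1) i k = ∑ j, Q (a, i) (b2, j) := by
        rw [show (∑ k, Ut (m+1) i k)
            = ∑ k : Fin (l+1), (if k = 0 then ∑ q, U (m+1) i q else 0) from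
          Finset.sum_congr rfl fun k _ => hUt (m+1) hlt i k]
        rw [Finset.sum_ite_eq' Finset.univ (0 : Fin (l+1)) (fun _ => ∑ q, U (m+1) i q)]
        simp only [Finset.mem_univ, if_true]
        exact Finset.sum_congr rfl fun j _ => hUrow j
      have hBsum : ∑ k, B (m+1) i k
          = (∑ j, Q (a, i) (a, j)) + ∑ j, Q (a, i) (b2, j) := by
        rw [show (∑ k, B (m+1) i k) = ∑ k, (W (m+1) i k + Ut (m+1) i k) from
          Finset.sum_congr rfl fun k _ => by rw [hB (m+1) hm2]; rfl]
        rw [Finset.sum_add_distrib, hUtrow]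
        congr 1
        exact Finset.sum_congr rfl fun j _ => hWrow j
      rw [hD0]
      have hQd : ∑ j, D (m+1) i j = ∑ j, Q (a, i) (⟨m, by omega⟩, j) :=
        Finset.sum_congr rfl fun j _ => hDrow j
      linarith [h0, hBsum, hQd]
  have hDeq : D (m+1) = -(B (m+1) * J) := by
    ext i j
    by_cases hj : j = 0
    · subst hj
      rw [Matrix.neg_apply, hmulJ]
      simp [hD1 i]
    · rw [hDES (m+1) hm1 hm2 i j hj, Matrix.neg_apply, hmulJ]
      simp [hj]
  have hUteq : Ut m = U m * J := by
    ext i j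
    rw [hUt m hm, hmulJ]
  have hdet : IsUnit (B (m+1)).det :=
    (Matrix.isUnit_iff_isUnit_det _).mp (hBinv (m+1) hm1 hm2)
  have hinv : (B (m+1))⁻¹ * B (m+1) = 1 := Matrix.nonsing_inv_mul _ hdet
  rw [hR (m+1) hm1 hm2, hDeq, hUteq]
  have : m + 1 - 1 = m := by omega
  rw [this]
  calc -(U m * (B (m+1))⁻¹) * -(B (m+1) * J)
      = U m * ((B (m+1))⁻¹ * (B (m+1) * J)) := by
        rw [neg_mul_neg, Matrix.mul_assoc]
    _ = U m * J := by rw [← Matrix.mul_assoc (B (m+1))⁻¹, hinv, Matrix.one_mul]
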